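/- The three 1-dimensional complex triassociative algebras Trias₁¹ (abelian), Trias₁² (x⊥x = x, other products zero), and Trias₁³ (x⊢x = x⊣x = x⊥x = x) are pairwise non-isomorphic. -/
import Mathlib


/-- A triassociative algebra structure on a complex vector space `T`:
three bilinear operations `l` (⊢), `r` (⊣), `m` (⊥) satisfying the
11 Loday–Ronco identities. -/
structure Trias (T : Type*) [AddCommGroup T] [Module ℂ T] where
  l : T →ₗ[ℂ] T →ₗ[ℂ] T
  r : T →ₗ[ℂ] T →ₗ[ℂ] T
  m : T →ₗ[ℂ] T →ₗ[ℂ] T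
  A1 : ∀ x y z, l (l x y) z = l x (l y z)
  A2 : ∀ x y z, r (r x y) z = r x (r y z)
  D1 : ∀ x y z, l (r x y) z = l x (l y z)
  D2 : ∀ x y z, r (r x y) z = r x (l y z)
  S1 : ∀ x y z, r (l x y) z = l x (r y z)
  T1 : ∀ x y z, l (m x y) z = l x (l y z)
  T2 : ∀ x y z, r (r x y) z = r x (m y z)
  T3 : ∀ x y z, m (l x y) z = l x (m y z)
  T4 : ∀ x y z, r (m x y) z = m x (r y z)
  S2 : ∀ x y z, m (r x y) z = m x (l y z)
  A3 : ∀ x y z, m (m x y) z = m x (m y z)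

/-- Isomorphism of triassociative algebras: a linear bijection preserving
all three operations. -/
def TriasIso {T S : Type*} [AddCommGroup T] [Module ℂ T] [AddCommGroup S]
    [Module ℂ S] (A : Trias T) (B : Trias S) : Prop :=
  ∃ e : T ≃ₗ[ℂ] S,
    (∀ a b, e (A.l a b) = B.l (e a) (e b)) ∧
    (∀ a b, e (A.r a b) = B.r (e a) (e b)) ∧
    (∀ a b, e (A.m a b) = B.m (e a) (e b))

/-- `Trias₁¹`: the abelian 1-dimensional triassociative algebra. -/
noncomputable def trias11 : Trias ℂ where
  l := 0
  r := 0
  m := 0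
  A1 := by intros; simp
  A2 := by intros; simp
  D1 := by intros; simp
  D2 := by intros; simp
  S1 := by intros; simp
  T1 := by intros; simp
  T2 := by intros; simp
  T3 := by intros; simp
  T4 := by intros; simp
  S2 := by intros; simp
  A3 := by intros; simp

/-- `Trias₁²`: `x⊥x = x`, the other two products zero. -/
noncomputable def trias12 : Trias ℂ where
  l := 0
  r := 0
  m := LinearMap.mul ℂ ℂ
  A1 := by intros; simp
  A2 := by intros; simp
  D1 := by intros; simp
  D2 := by intros; simp
  S1 := by intros; simp
  T1 := by intros; simp
  T2 := by intros; simp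
  T3 := by intros; simp
  T4 := by intros; simp
  S2 := by intros; simp
  A3 := by intros; simp [mul_assoc]

/-- `Trias₁³`: `x⊢x = x⊣x = x⊥x = x`. -/
noncomputable def trias13 : Trias ℂ where
  l := LinearMap.mul ℂ ℂ
  r := LinearMap.mul ℂ ℂ
  m := LinearMap.mul ℂ ℂ
  A1 := by intros; simp [mul_assoc]
  A2 := by intros; simp [mul_assoc]
  D1 := by intros; simp [mul_assoc]
  D2 := by intros; simp [mul_assoc]
  S1 := by intros; simp [mul_assoc]
  T1 := by intros; simp [mul_assoc]
  T2 := by intros; simp [mul_assoc]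
  T3 := by intros; simp [mul_assoc]
  T4 := by intros; simp [mul_assoc]
  S2 := by intros; simp [mul_assoc]
  A3 := by intros; simp [mul_assoc]

/-- `Trias₁¹`, `Trias₁²`, `Trias₁³` are pairwise non-isomorphic. -/
theorem stmt5 :
    ¬ TriasIso trias11 trias12 ∧ ¬ TriasIso trias11 trias13 ∧
    ¬ TriasIso trias12 trias13 := by
  refine ⟨?_, ?_, ?_⟩
  · rintro ⟨e, -, -, hm⟩
    have h := hm 1 1
    simp [trias11, trias12] at h
  · rintro ⟨e, hl, -, -⟩
    have h := hl 1 1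
    simp [trias11, trias13] at h
  · rintro ⟨e, hl, -, -⟩
    have h := hl 1 1
    simp [trias12, trias13] at h
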